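/- Let R be a ring and A = Σ_{i=1}^k t^i A_i with A_i ∈ M_n(R). Define the companion-type block matrix A^□ over R of size kn with first block row (A_1, A_2, …, A_k), identity blocks I_n on the subdiagonal, and zeros elsewhere. Then det-free identity: (I_{kn} − t·A^□) can be transformed by elementary row and column operations over R[t] into (I_n − A(t)) ⊕ I_{(k−1)n}, i.e., I − tA^□ is El(R[t])-equivalent to (I − A) ⊕ I (a form of the Higman trick/linearization). -/

import Mathlib

/-!
Write `t A^□ = B + S`, where `B` is the first block row `(t A_1, …, t A_k)` and `S` carries
`t I_n` on the block subdiagonal. Since `S` is nilpotent, `1 - S` has the block lower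
unitriangular inverse `F` with blocks `t^{i-j} I_n`, and `(1 - t A^□) F = 1 - B F`. The matrix
`B F` lives in the first block row, and its first block is `A(t)`; adding multiples of the other
block rows to the first one clears the rest of that row, leaving `(1 - A(t)) ⊕ 1`. Both `F` and
the row operation are unitriangular for a suitable ordering of the indices, hence products of
elementary matrices.
-/

open Matrix Polynomial

/-- `E` is an elementary matrix: the identity altered in a single off-diagonal entry. -/
def IsElementary {ι : Type*} [DecidableEq ι] {S : Type*} [Semiring S] (E : Matrix ι ι S) : Prop :=
  ∃ i j c, i ≠ j ∧ E = 1 + Matrix.single i j c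

/-- `E` is a product of elementary matrices. -/
def IsElemProd {ι : Type*} [DecidableEq ι] [Fintype ι] {S : Type*} [Semiring S]
    (E : Matrix ι ι S) : Prop :=
  ∃ L : List (Matrix ι ι S), (∀ X ∈ L, IsElementary X) ∧ E = L.prod

theorem List.prod_map_one_add_of_pairwise {M : Type*} [Semiring M] {L : List M}
    (hL : L.Pairwise fun x y => x * y = 0) : (L.map (1 + ·)).prod = 1 + L.sum := by
  induction L with
  | nil => simp
  | cons x L ih =>
    rw [List.pairwise_cons] at hL
    have hx : x * L.sum = 0 := by
      rw [← L.map_id, ← List.sum_map_mul_left]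
      exact List.sum_eq_zero (by simpa using hL.1)
    rw [List.map_cons, List.prod_cons, ih hL.2, List.sum_cons, mul_add, add_mul, add_mul, hx]
    noncomm_ring

section ElementaryProducts

variable {ι : Type*} [DecidableEq ι] [Fintype ι] {S : Type*} [Semiring S]

theorem isElemProd_one : IsElemProd (1 : Matrix ι ι S) :=
  ⟨[], by simp, by simp⟩

theorem IsElemProd.mul {E F : Matrix ι ι S} (hE : IsElemProd E) (hF : IsElemProd F) :
    IsElemProd (E * F) := by
  obtain ⟨L₁, h₁, rfl⟩ := hE
  obtain ⟨L₂, h₂, rfl⟩ := hF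
  refine ⟨L₁ ++ L₂, fun X hX => ?_, List.prod_append.symm⟩
  rcases List.mem_append.1 hX with h | h
  exacts [h₁ X h, h₂ X h]

theorem isElemProd_list_prod {L : List (Matrix ι ι S)} (hL : ∀ M ∈ L, IsElemProd M) :
    IsElemProd L.prod := by
  induction L with
  | nil => exact isElemProd_one
  | cons M L ih =>
    rw [List.forall_mem_cons] at hL
    exact hL.1.mul (ih hL.2)

theorem isElemProd_one_add_single {i j : ι} (c : S) (h : c ≠ 0 → i ≠ j) :
    IsElemProd (1 + Matrix.single i j c) := by
  by_cases hc : c = 0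
  · simpa [hc] using isElemProd_one
  · exact ⟨[1 + Matrix.single i j c], by simpa using ⟨i, j, c, h hc, rfl⟩, by simp⟩

/-- Sorting the entries of `N` by the weight of their column makes the product of any two of
the corresponding matrix units, taken in this order, vanish. -/
theorem isElemProd_one_add_of_lt {α : Type*} [LinearOrder α] (w : ι → α) {N : Matrix ι ι S}
    (hN : ∀ i j, N i j ≠ 0 → w j < w i) : IsElemProd (1 + N) := by
  let L := (Finset.univ : Finset (ι × ι)).toList.mergeSort fun x y => decide (w x.2 ≤ w y.2)
  let entry : ι × ι → Matrix ι ι S := fun x => Matrix.single x.1 x.2 (N x.1 x.2)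
  have hsum : (L.map entry).sum = N := by
    rw [((List.mergeSort_perm _ _).map entry).sum_eq, Finset.sum_map_toList,
      Fintype.sum_prod_type]
    exact (Matrix.matrix_eq_sum_single N).symm
  have hsorted : L.Pairwise fun x y => w x.2 ≤ w y.2 := by
    simpa using List.pairwise_mergeSort (le := fun x y : ι × ι => decide (w x.2 ≤ w y.2))
      (fun _ _ _ hab hbc => by simp only [decide_eq_true_eq] at *; exact hab.trans hbc)
      (fun _ _ => by simpa using le_total _ _) _
  have hpair : (L.map entry).Pairwise fun X Y => X * Y = 0 := by
    refine List.pairwise_map.2 (hsorted.imp fun {x y} hxy => ?_)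
    by_cases hxy' : x.2 = y.1
    · by_cases hy : N y.1 y.2 = 0
      · simp [entry, hy]
      · exact absurd hxy (not_le.2 (hxy' ▸ hN _ _ hy))
    · exact Matrix.single_mul_single_of_ne _ _ _ _ hxy' _
  rw [← hsum, ← List.prod_map_one_add_of_pairwise hpair, List.map_map]
  refine isElemProd_list_prod fun M hM => ?_
  obtain ⟨x, -, rfl⟩ := List.mem_map.1 hM
  exact isElemProd_one_add_single _ fun hx h => (hN _ _ hx).ne (congrArg w h.symm)

theorem isElemProd_of_lt {α : Type*} [LinearOrder α] (w : ι → α) {M : Matrix ι ι S}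
    (hdiag : ∀ i, M i i = 1) (hM : ∀ i j, i ≠ j → M i j ≠ 0 → w j < w i) :
    IsElemProd M := by
  let N : Matrix ι ι S := fun i j => if i = j then 0 else M i j
  have hMN : M = 1 + N := by
    ext i j : 1
    rw [Matrix.add_apply, Matrix.one_apply]
    by_cases h : i = j
    · simp [N, h, hdiag]
    · simp [N, h]
  rw [hMN]
  refine isElemProd_one_add_of_lt w fun i j hij => ?_
  by_cases h : i = j
  · simp [N, h] at hij
  · exact hM i j h (by simpa [N, h] using hij)

theorem exists_isElemProd_mul_one_sub_eq {k : ℕ} {S : Type*} [Ring S]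
    {G : Matrix (Fin k × ι) (Fin k × ι) S} (hG : ∀ p q, (p.1 : ℕ) ≠ 0 → G p q = 0) :
    ∃ E : Matrix (Fin k × ι) (Fin k × ι) S, IsElemProd E ∧
      E * (1 - G) = fun p q =>
        if (p.1 : ℕ) = 0 ∧ (q.1 : ℕ) = 0 then (1 - G) p q else if p = q then 1 else 0 := by
  let G' : Matrix (Fin k × ι) (Fin k × ι) S := fun p q => if (q.1 : ℕ) = 0 then 0 else G p q
  have hG' : ∀ p q, G' p q ≠ 0 → (p.1 : ℕ) = 0 ∧ (q.1 : ℕ) ≠ 0 := fun p q h => by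
    by_cases hq : (q.1 : ℕ) = 0
    · simp [G', hq] at h
    · exact ⟨not_not.1 fun hp => h (by simp [G', hq, hG p q hp]), hq⟩
  have hG'G : G' * G = 0 := by
    ext p q : 1
    rw [Matrix.mul_apply, Matrix.zero_apply]
    refine Finset.sum_eq_zero fun r _ => ?_
    by_cases hr : G' p r = 0
    · rw [hr, zero_mul]
    · rw [hG r q (hG' p r hr).2, mul_zero]
  refine ⟨1 + G', ?_, ?_⟩
  · refine isElemProd_one_add_of_lt (fun p => OrderDual.toDual (p.1 : ℕ)) fun p q h => ?_
    obtain ⟨hp, hq⟩ := hG' p q h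
    exact OrderDual.toDual_lt_toDual.2 (by omega)
  · have hexpand : (1 + G') * (1 - G) = 1 - G + G' := by
      rw [mul_sub, add_mul, add_mul, hG'G]
      noncomm_ring
    rw [hexpand]
    ext p q : 1
    rw [Matrix.add_apply, Matrix.sub_apply, Matrix.one_apply]
    by_cases hp : (p.1 : ℕ) = 0 <;> by_cases hq : (q.1 : ℕ) = 0
    all_goals simp [G', hp, hq]
    exact hG p q hp

end ElementaryProducts

section Linearization

variable (R : Type*) [Ring R] (k n : ℕ)

noncomputable def shiftX : Matrix (Fin k × Fin n) (Fin k × Fin n) R[X] := fun p q =>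
  if (p.1 : ℕ) = q.1 + 1 ∧ p.2 = q.2 then X else 0

noncomputable def invOneSubShiftX : Matrix (Fin k × Fin n) (Fin k × Fin n) R[X] := fun p q =>
  if p.2 = q.2 ∧ (q.1 : ℕ) ≤ p.1 then X ^ ((p.1 : ℕ) - q.1) else 0

variable {R k n}

theorem shiftX_mul_apply (M : Matrix (Fin k × Fin n) (Fin k × Fin n) R[X]) (p q) :
    (shiftX R k n * M) p q =
      if h : (p.1 : ℕ) = 0 then 0 else X * M (⟨p.1 - 1, by omega⟩, p.2) q := by
  split_ifs with hp
  · refine Finset.sum_eq_zero fun r _ => ?_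
    simp [shiftX, hp]
  · rw [Matrix.mul_apply,
      Finset.sum_eq_single (⟨⟨p.1 - 1, by omega⟩, p.2⟩ : Fin k × Fin n)]
    · simp only [shiftX, and_true, ite_mul, zero_mul, ite_eq_left_iff]
      omega
    · intro r _ hr
      simp only [shiftX, ite_mul, zero_mul]
      exact if_neg fun h => hr (Prod.ext (Fin.ext (by dsimp only; omega)) h.2.symm)
    · simp

theorem one_sub_shiftX_mul_invOneSubShiftX : (1 - shiftX R k n) * invOneSubShiftX R k n = 1 := by
  ext p q : 1
  rw [sub_mul, one_mul, Matrix.sub_apply, shiftX_mul_apply, Matrix.one_apply]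
  simp only [invOneSubShiftX, Prod.ext_iff, Fin.ext_iff]
  split_ifs <;> first | omega | simp | skip
  all_goals first
    | rw [show (p.1 : ℕ) - q.1 = 0 by omega, pow_zero]
    | rw [← pow_succ', sub_eq_zero, show (p.1 : ℕ) - 1 - q.1 + 1 = p.1 - q.1 by omega]

theorem isElemProd_invOneSubShiftX : IsElemProd (invOneSubShiftX R k n) := by
  refine isElemProd_of_lt (fun p => (p.1 : ℕ)) (fun p => by simp [invOneSubShiftX])
    fun p q hpq h => ?_
  simp only [invOneSubShiftX, ne_eq, ite_eq_right_iff, Classical.not_imp] at h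
  exact lt_of_le_of_ne h.1.2 fun h' => hpq (Prod.ext (Fin.ext h'.symm) h.1.1)

variable (a : Fin k → Matrix (Fin n) (Fin n) R)

def blockCompanion : Matrix (Fin k × Fin n) (Fin k × Fin n) R := fun p q =>
  (if (p.1 : ℕ) = 0 then a q.1 p.2 q.2 else 0) +
    (if (p.1 : ℕ) = (q.1 : ℕ) + 1 ∧ p.2 = q.2 then 1 else 0)

noncomputable def firstBlockRowX : Matrix (Fin k × Fin n) (Fin k × Fin n) R[X] := fun p q =>
  if (p.1 : ℕ) = 0 then X * C (a q.1 p.2 q.2) else 0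

theorem X_smul_map_C_blockCompanion :
    (X : R[X]) • (blockCompanion a).map C = firstBlockRowX a + shiftX R k n := by
  ext p q : 1
  simp only [Matrix.smul_apply, Matrix.map_apply, Matrix.add_apply, blockCompanion,
    firstBlockRowX, shiftX, smul_eq_mul, map_add, mul_add]
  congr 1 <;> split_ifs <;> simp

theorem firstBlockRowX_mul_apply_of_ne_zero (M : Matrix (Fin k × Fin n) (Fin k × Fin n) R[X])
    {p : Fin k × Fin n} (hp : (p.1 : ℕ) ≠ 0) (q) : (firstBlockRowX a * M) p q = 0 :=
  Finset.sum_eq_zero fun r _ => by simp [firstBlockRowX, hp]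

theorem one_sub_firstBlockRowX_mul_invOneSubShiftX_apply {p q : Fin k × Fin n}
    (hp : (p.1 : ℕ) = 0) (hq : (q.1 : ℕ) = 0) :
    (1 - firstBlockRowX a * invOneSubShiftX R k n) p q =
      (1 - ∑ i : Fin k, (X : R[X]) ^ ((i : ℕ) + 1) • (a i).map C) p.2 q.2 := by
  have hpq : p.1 = q.1 := Fin.ext (hp.trans hq.symm)
  rw [Matrix.sub_apply, Matrix.sub_apply]
  congr 1
  · simp [Matrix.one_apply, Prod.ext_iff, hpq]
  rw [Matrix.mul_apply, Fintype.sum_prod_type, Matrix.sum_apply]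
  refine Finset.sum_congr rfl fun i _ => ?_
  simp [firstBlockRowX, invOneSubShiftX, hp, hq, mul_assoc, ← pow_succ', Polynomial.X_pow_mul]

end Linearization

/-- Higman linearization: with `A(t) = Σ_{i=1}^k t^i A_i` (here `a i = A_{i+1}`) and `A□`
the block companion matrix (first block row `A_1, …, A_k`, identity blocks on the
subdiagonal), `I − t·A□` is transformed by elementary row and column operations over
`R[t]` into `(I − A(t)) ⊕ I_{(k−1)n}`. -/
theorem stmt18 {R : Type*} [Ring R] {k n : ℕ} (a : Fin k → Matrix (Fin n) (Fin n) R) :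
    let Abox : Matrix (Fin k × Fin n) (Fin k × Fin n) R := fun p q =>
      (if (p.1 : ℕ) = 0 then a q.1 p.2 q.2 else 0) +
        (if (p.1 : ℕ) = (q.1 : ℕ) + 1 ∧ p.2 = q.2 then 1 else 0)
    let Apoly : Matrix (Fin n) (Fin n) (Polynomial R) :=
      ∑ i : Fin k, ((Polynomial.X : Polynomial R) ^ ((i : ℕ) + 1)) •
        (a i).map (fun r => Polynomial.C r)
    let T : Matrix (Fin k × Fin n) (Fin k × Fin n) (Polynomial R) := fun p q =>
      if (p.1 : ℕ) = 0 ∧ (q.1 : ℕ) = 0 then (1 - Apoly) p.2 q.2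
      else if p = q then 1 else 0
    ∃ E F : Matrix (Fin k × Fin n) (Fin k × Fin n) (Polynomial R),
      IsElemProd E ∧ IsElemProd F ∧
      E * (1 - (Polynomial.X : Polynomial R) • Abox.map (fun r => Polynomial.C r)) * F = T := by
  intro _ _ T
  obtain ⟨E, hE, hEG⟩ :=
    exists_isElemProd_mul_one_sub_eq (G := firstBlockRowX a * invOneSubShiftX R k n)
      fun p q hp => firstBlockRowX_mul_apply_of_ne_zero a _ hp q
  refine ⟨E, invOneSubShiftX R k n, hE, isElemProd_invOneSubShiftX, ?_⟩
  have hsplit : 1 - (X : R[X]) • (blockCompanion a).map C =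
      (1 - shiftX R k n) - firstBlockRowX a := by
    rw [X_smul_map_C_blockCompanion]
    abel
  change E * (1 - (X : R[X]) • (blockCompanion a).map C) * _ = T
  rw [mul_assoc, hsplit, sub_mul, one_sub_shiftX_mul_invOneSubShiftX, hEG]
  ext p q : 1
  by_cases h : (p.1 : ℕ) = 0 ∧ (q.1 : ℕ) = 0
  · simp only [T, if_pos h]
    exact one_sub_firstBlockRowX_mul_invOneSubShiftX_apply a h.1 h.2
  · simp only [T, if_neg h]
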